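/- arXiv:2208.07237 — 3 statements merged into one kernel-verified Lean document; each statement's English description precedes it below -/
import Mathlib

section
/- For every real x > 0, the exponential integral satisfies E₁(x) = ∫_x^∞ e^{−t}/t dt < e^{−x} · ln(1 + 1/x). -/
open MeasureTheory Real Set Filter Topology

/-! On `(x, ∞)` we have `0 < 1 + x - e^{x-t} < t`, the upper bound being `e^{x-t} > 1 + (x - t)`.
Hence `e^{-t}/t < e^{-t}/(1 + x - e^{x-t})`, and the right-hand side is the derivative of
`e^{-x} log(1 + x - e^{x-t})`, whose increment over `(x, ∞)` is `e^{-x} log((1 + x)/x)`. -/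

theorem setIntegral_lt_setIntegral_of_forall_lt {α : Type*} [MeasurableSpace α] {μ : Measure α}
    {s : Set α} {f g : α → ℝ} (hs : MeasurableSet s) (hμs : μ s ≠ 0) (hf : IntegrableOn f s μ)
    (hg : IntegrableOn g s μ) (hlt : ∀ t ∈ s, f t < g t) :
    ∫ t in s, f t ∂μ < ∫ t in s, g t ∂μ := by
  have hle : f ≤ᵐ[μ.restrict s] g := (ae_restrict_mem hs).mono fun t ht => (hlt t ht).le
  refine (integral_mono_ae hf hg hle).lt_of_ne fun heq => hμs ?_
  have hfg := (integral_eq_iff_of_ae_le hf hg hle).1 heq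
  rw [EventuallyEq, ae_restrict_iff' hs] at hfg
  exact measure_eq_zero_iff_ae_notMem.2 (hfg.mono fun t h hts => (hlt t hts).ne (h hts))

section

variable {c x : ℝ}

theorem sub_one_le_sub_exp_sub {t : ℝ} (ht : x ≤ t) : c - 1 ≤ c - exp (x - t) := by
  have : exp (x - t) ≤ 1 := exp_le_one_iff.2 (by linarith)
  linarith

theorem hasDerivAt_exp_neg_mul_log_sub_exp_sub {t : ℝ} (ht : 0 < c - exp (x - t)) :
    HasDerivAt (fun t => exp (-x) * log (c - exp (x - t))) (exp (-t) / (c - exp (x - t))) t := by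
  have hinner : HasDerivAt (fun t => c - exp (x - t)) (exp (x - t)) t := by
    simpa using ((hasDerivAt_id t).const_sub x).exp.const_sub c
  refine ((hinner.log ht.ne').const_mul (exp (-x))).congr_deriv ?_
  rw [← mul_div_assoc, ← exp_add, show -x + (x - t) = -t by ring]

theorem tendsto_exp_neg_mul_log_sub_exp_sub (hc : c ≠ 0) :
    Tendsto (fun t => exp (-x) * log (c - exp (x - t))) atTop (𝓝 (exp (-x) * log c)) := by
  have hexp : Tendsto (fun t => exp (x - t)) atTop (𝓝 0) :=
    tendsto_exp_atBot.comp (tendsto_atBot_add_const_left _ x tendsto_neg_atTop_atBot)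
  have hinner : Tendsto (fun t => c - exp (x - t)) atTop (𝓝 c) := by
    simpa using hexp.const_sub c
  exact ((continuousAt_log hc).tendsto.comp hinner).const_mul (exp (-x))

theorem exp_neg_div_sub_exp_sub_nonneg (hc : 1 ≤ c) {t : ℝ} (ht : x ≤ t) :
    0 ≤ exp (-t) / (c - exp (x - t)) :=
  div_nonneg (exp_nonneg _) (by linarith [sub_one_le_sub_exp_sub (c := c) ht])

theorem hasDerivAt_exp_neg_mul_log_sub_exp_sub_of_le (hc : 1 < c) {t : ℝ} (ht : x ≤ t) :
    HasDerivAt (fun t => exp (-x) * log (c - exp (x - t))) (exp (-t) / (c - exp (x - t))) t :=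
  hasDerivAt_exp_neg_mul_log_sub_exp_sub (by linarith [sub_one_le_sub_exp_sub (c := c) ht])

theorem integrableOn_Ioi_exp_neg_div_sub_exp_sub (hc : 1 < c) :
    IntegrableOn (fun t => exp (-t) / (c - exp (x - t))) (Ioi x) :=
  integrableOn_Ioi_deriv_of_nonneg'
    (fun _ ht => hasDerivAt_exp_neg_mul_log_sub_exp_sub_of_le hc ht)
    (fun _ ht => exp_neg_div_sub_exp_sub_nonneg hc.le (le_of_lt ht))
    (tendsto_exp_neg_mul_log_sub_exp_sub (by positivity))

theorem integral_Ioi_exp_neg_div_sub_exp_sub (hc : 1 < c) :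
    ∫ t in Ioi x, exp (-t) / (c - exp (x - t)) = exp (-x) * log (c / (c - 1)) := by
  rw [integral_Ioi_of_hasDerivAt_of_nonneg'
    (fun _ ht => hasDerivAt_exp_neg_mul_log_sub_exp_sub_of_le hc ht)
    (fun _ ht => exp_neg_div_sub_exp_sub_nonneg hc.le (le_of_lt ht))
    (tendsto_exp_neg_mul_log_sub_exp_sub (by positivity)),
    sub_self, exp_zero, ← mul_sub, log_div (by positivity) (by linarith)]

end

theorem exp_neg_div_lt_exp_neg_div_one_add_sub_exp_sub {x t : ℝ} (hx : 0 ≤ x) (ht : x < t) :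
    exp (-t) / t < exp (-t) / (1 + x - exp (x - t)) := by
  have hpos : 0 < 1 + x - exp (x - t) := by linarith [exp_lt_one_iff.2 (sub_neg.2 ht)]
  have hlt : 1 + x - exp (x - t) < t := by linarith [add_one_lt_exp (x := x - t) (by linarith)]
  exact div_lt_div_of_pos_left (exp_pos _) hpos hlt

/-- **Elementary upper bound for the exponential integral**
(Paper: elementary-function bracket for `E₁` used in the communication-power model).
For every `x > 0`, `E₁(x) = ∫_x^∞ e^{−t}/t dt < e^{−x} ln(1 + 1/x)`. -/
theorem expIntegral_lt_exp_mul_log (x : ℝ) (hx : 0 < x) :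
    ∫ t in Set.Ioi x, Real.exp (-t) / t < Real.exp (-x) * Real.log (1 + 1 / x) := by
  have hc : 1 < 1 + x := by linarith
  have hg := integrableOn_Ioi_exp_neg_div_sub_exp_sub (x := x) hc
  have hf : IntegrableOn (fun t => exp (-t) / t) (Ioi x) := by
    refine hg.mono' (by fun_prop : Measurable fun t => exp (-t) / t).aestronglyMeasurable ?_
    filter_upwards [ae_restrict_mem measurableSet_Ioi] with t ht
    rw [norm_of_nonneg (div_nonneg (exp_nonneg _) (hx.trans ht).le)]
    exact (exp_neg_div_lt_exp_neg_div_one_add_sub_exp_sub hx.le ht).le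
  calc ∫ t in Ioi x, exp (-t) / t
      < ∫ t in Ioi x, exp (-t) / (1 + x - exp (x - t)) :=
        setIntegral_lt_setIntegral_of_forall_lt measurableSet_Ioi (by simp) hf hg
          fun _ ht => exp_neg_div_lt_exp_neg_div_one_add_sub_exp_sub hx.le ht
    _ = exp (-x) * log (1 + 1 / x) := by
        rw [integral_Ioi_exp_neg_div_sub_exp_sub hc, add_sub_cancel_left, add_div,
          div_self hx.ne', add_comm]
end

section
/- For all constants A ≥ 0, B ≥ 0, C ≥ 0 and q ≥ 0, the function Θ₁(p, H) = A (p + q)/(p H) + B √(p + q)/√(p H) + C is convex on the set {(p, H) ∈ ℝ² : p > 0 and H > 0}. -/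
/-!
Write `g(p, H) = √(H · p / (p + q))`. Then `Θ₁ = A / g² + B / g + C`, and
`t ↦ A / t² + B / t + C` is convex and antitone on `t > 0`, so it suffices that `g` is concave.
This holds because `H` and `p / (p + q)` are concave and positive, and the geometric mean of
two nonnegative concave functions is concave.
-/

open Set

section

variable {E : Type*} [AddCommGroup E] [Module ℝ E] {s : Set E} {f g : E → ℝ}

theorem ConcaveOn.sqrt_mul (hf : ConcaveOn ℝ s f) (hg : ConcaveOn ℝ s g)
    (hf₀ : ∀ x ∈ s, 0 ≤ f x) (hg₀ : ∀ x ∈ s, 0 ≤ g x) :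
    ConcaveOn ℝ s fun x => √(f x * g x) := by
  refine ⟨hf.1, fun x hx y hy a b ha hb hab => ?_⟩
  have hz := hf.1 hx hy ha hb hab
  have cauchySchwarz : a * √(f x * g x) + b * √(f y * g y) ≤
      √((a * f x + b * f y) * (a * g x + b * g y)) := by
    apply Real.le_sqrt_of_sq_le
    have key : (a * (√(f x) * √(g x)) + b * (√(f y) * √(g y))) ^ 2 ≤
        (a * √(f x) ^ 2 + b * √(f y) ^ 2) * (a * √(g x) ^ 2 + b * √(g y) ^ 2) := by
      nlinarith [mul_nonneg (mul_nonneg ha hb)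
        (sq_nonneg (√(f x) * √(g y) - √(f y) * √(g x)))]
    rwa [Real.sq_sqrt (hf₀ x hx), Real.sq_sqrt (hg₀ x hx), Real.sq_sqrt (hf₀ y hy),
      Real.sq_sqrt (hg₀ y hy), ← Real.sqrt_mul (hf₀ x hx), ← Real.sqrt_mul (hf₀ y hy)] at key
  calc a • √(f x * g x) + b • √(f y * g y)
      ≤ √((a * f x + b * f y) * (a * g x + b * g y)) := cauchySchwarz
    _ ≤ √(f (a • x + b • y) * g (a • x + b • y)) :=
      Real.sqrt_le_sqrt (mul_le_mul (hf.2 hx hy ha hb hab) (hg.2 hx hy ha hb hab)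
        (by nlinarith [hg₀ x hx, hg₀ y hy]) (hf₀ _ hz))

theorem ConvexOn.comp_concaveOn_of_mapsTo {t : Set ℝ} {φ : ℝ → ℝ} (hφ : ConvexOn ℝ t φ)
    (hφ' : AntitoneOn φ t) (hf : ConcaveOn ℝ s f) (hst : MapsTo f s t) :
    ConvexOn ℝ s (φ ∘ f) := by
  refine ⟨hf.1, fun x hx y hy a b ha hb hab => ?_⟩
  have hmix : a • f x + b • f y ∈ t := hφ.1 (hst hx) (hst hy) ha hb hab
  calc φ (f (a • x + b • y)) ≤ φ (a • f x + b • f y) :=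
        hφ' hmix (hst (hf.1 hx hy ha hb hab)) (hf.2 hx hy ha hb hab)
    _ ≤ a • φ (f x) + b • φ (f y) := hφ.2 (hst hx) (hst hy) ha hb hab

end

theorem concaveOn_div_add_const {q : ℝ} (hq : 0 ≤ q) :
    ConcaveOn ℝ (Ioi 0) fun x => x / (x + q) := by
  refine ⟨convex_Ioi 0, fun x hx y hy a b ha hb hab => ?_⟩
  have hz := (convex_Ioi (0 : ℝ)) hx hy ha hb hab
  simp only [mem_Ioi, smul_eq_mul] at *
  have hxq : 0 < x + q := by linarith
  have hyq : 0 < y + q := by linarith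
  have hzq : 0 < a * x + b * y + q := by linarith
  have gap : (a * x + b * y) / (a * x + b * y + q) - (a * (x / (x + q)) + b * (y / (y + q))) =
      a * b * q * (x - y) ^ 2 / ((x + q) * (y + q) * (a * x + b * y + q)) := by
    obtain rfl : b = 1 - a := by linarith
    field_simp
    ring
  have gap_nonneg : 0 ≤ a * b * q * (x - y) ^ 2 / ((x + q) * (y + q) * (a * x + b * y + q)) := by
    positivity
  linarith

section

variable {A B : ℝ}

theorem convexOn_inv_quadratic (hA : 0 ≤ A) (hB : 0 ≤ B) (C : ℝ) :
    ConvexOn ℝ (Ioi 0) fun t : ℝ => A * t⁻¹ ^ 2 + B * t⁻¹ + C := by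
  have h2 := (convexOn_zpow (𝕜 := ℝ) (-2)).smul hA
  have h1 := (convexOn_zpow (𝕜 := ℝ) (-1)).smul hB
  refine ((h2.add h1).add (convexOn_const C (convex_Ioi 0))).congr fun t _ => ?_
  simp [zpow_neg, inv_pow]

theorem antitoneOn_inv_quadratic (hA : 0 ≤ A) (hB : 0 ≤ B) (C : ℝ) :
    AntitoneOn (fun t : ℝ => A * t⁻¹ ^ 2 + B * t⁻¹ + C) (Ioi 0) := by
  intro s hs t ht hst
  have hinv : t⁻¹ ≤ s⁻¹ := inv_anti₀ hs hst
  dsimp only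
  gcongr
  exact inv_nonneg.2 (le_of_lt ht)

end

theorem theta1_convexOn_general (A B C q : ℝ) (hA : 0 ≤ A) (hB : 0 ≤ B)
    (hq : 0 ≤ q) :
    ConvexOn ℝ {x : ℝ × ℝ | 0 < x.1 ∧ 0 < x.2}
      (fun x => A * (x.1 + q) / (x.1 * x.2)
        + B * Real.sqrt (x.1 + q) / Real.sqrt (x.1 * x.2) + C) := by
  set S := {x : ℝ × ℝ | 0 < x.1 ∧ 0 < x.2}
  have hS : Convex ℝ S := (convex_Ioi 0).prod (convex_Ioi 0)
  have hsnd : ConcaveOn ℝ S fun x => x.2 := (LinearMap.snd ℝ ℝ ℝ).concaveOn hS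
  have hfrac : ConcaveOn ℝ S fun x => x.1 / (x.1 + q) :=
    ((concaveOn_div_add_const hq).comp_linearMap (LinearMap.fst ℝ ℝ ℝ)).subset
      (fun x hx => hx.1) hS
  have hg : ConcaveOn ℝ S fun x => √(x.2 * (x.1 / (x.1 + q))) :=
    hsnd.sqrt_mul hfrac (fun x hx => hx.2.le) fun x hx => by have := hx.1; positivity
  have hg_pos : MapsTo (fun x => √(x.2 * (x.1 / (x.1 + q)))) S (Ioi 0) := fun x hx => by
    have := hx.1; have := hx.2; simp only [mem_Ioi]; positivity
  refine ((convexOn_inv_quadratic hA hB C).comp_concaveOn_of_mapsTo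
    (antitoneOn_inv_quadratic hA hB C) hg hg_pos).congr fun x ⟨hp, hH⟩ => ?_
  have hpq : 0 < x.1 + q := by linarith
  simp only [Function.comp_apply]
  rw [Real.sqrt_mul hH.le, Real.sqrt_div hp.le, Real.sqrt_mul hp.le, inv_pow, mul_pow,
    div_pow, Real.sq_sqrt hH.le, Real.sq_sqrt hp.le, Real.sq_sqrt hpq.le]
  field_simp

/-- **Convexity of the communication-round count `Θ₁`** (Paper: convexity claim for
`Θ₁` in the JCP control problem, proved in Appendix B via its Hessian). For
nonnegative constants `A, B, C, q`, the function
`Θ₁(p, H) = A (p+q)/(pH) + B √(p+q)/√(pH) + C` is convex on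
`{(p, H) : p > 0, H > 0}`. -/
theorem theta1_convexOn (A B C q : ℝ) (hA : 0 ≤ A) (hB : 0 ≤ B) (hC : 0 ≤ C)
    (hq : 0 ≤ q) :
    ConvexOn ℝ {x : ℝ × ℝ | 0 < x.1 ∧ 0 < x.2}
      (fun x => A * (x.1 + q) / (x.1 * x.2)
        + B * Real.sqrt (x.1 + q) / Real.sqrt (x.1 * x.2) + C) :=
  theta1_convexOn_general A B C q hA hB hq
end

section
/- For all constants c ≥ 0 and E₀ ≥ 0, the function Θ₂(p, H) = c · p² · ln(1 − 1/ln p) + E₀ · H is convex on the set {(p, H) ∈ ℝ² : 0 < p < 1}. -/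
open Real Set

/-!
Only the first variable matters: `E₀ H` is linear, and `p ↦ p² log(1 - 1/log p)` is convex on
`(0, 1)`. Writing `u = log p < 0` and `h(u) = log(1 - 1/u)`, so that `h'(u) = 1/(u(u-1))`, its second
derivative is `2 h(u) + 3/(u(u-1)) - (2u-1)/(u(u-1))²`, a sum of three nonnegative terms
since `1 - 1/u > 1`, `u(u-1) > 0` and `2u - 1 < 0`.
-/

theorem convexOn_of_hasDerivAt2_nonneg {D : Set ℝ} (hD : Convex ℝ D) (hDo : IsOpen D)
    {f f' f'' : ℝ → ℝ} (hf' : ∀ x ∈ D, HasDerivAt f (f' x) x)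
    (hf'' : ∀ x ∈ D, HasDerivAt f' (f'' x) x) (hf''₀ : ∀ x ∈ D, 0 ≤ f'' x) :
    ConvexOn ℝ D f := by
  refine convexOn_of_hasDerivWithinAt2_nonneg (f' := f') (f'' := f'') hD
    (fun x hx => (hf' x hx).continuousAt.continuousWithinAt) ?_ ?_ ?_ <;>
    rw [hDo.interior_eq]
  · exact fun x hx => (hf' x hx).hasDerivWithinAt
  · exact fun x hx => (hf'' x hx).hasDerivWithinAt
  · exact hf''₀

theorem one_lt_one_sub_one_div_of_neg {u : ℝ} (hu : u < 0) : 1 < 1 - 1 / u := by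
  have : 1 / u < 0 := one_div_neg.mpr hu
  linarith

theorem hasDerivAt_log_one_sub_one_div {u : ℝ} (hu0 : u ≠ 0) (hu1 : u ≠ 1) :
    HasDerivAt (fun v => log (1 - 1 / v)) (1 / (u * (u - 1))) u := by
  have hne : 1 - 1 / u ≠ 0 := by
    rw [sub_ne_zero, ne_comm, ne_eq, div_eq_one_iff_eq hu0]
    exact hu1.symm
  have hinv : HasDerivAt (fun v => 1 - 1 / v) (1 / u ^ 2) u := by
    simpa [one_div] using (hasDerivAt_inv hu0).const_sub 1
  refine (hinv.log hne).congr_deriv ?_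
  have : u - 1 ≠ 0 := sub_ne_zero.mpr hu1
  field_simp

noncomputable def commEnergy (p : ℝ) : ℝ := p ^ 2 * log (1 - 1 / log p)

noncomputable def commEnergyDeriv (p : ℝ) : ℝ :=
  2 * p * log (1 - 1 / log p) + p / (log p * (log p - 1))

noncomputable def commEnergyDeriv2 (p : ℝ) : ℝ :=
  2 * log (1 - 1 / log p) + 3 / (log p * (log p - 1))
    - (2 * log p - 1) / (log p * (log p - 1)) ^ 2

section Derivatives

variable {p : ℝ} (hp : p ≠ 0) (hL0 : log p ≠ 0) (hL1 : log p ≠ 1)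
include hp hL0 hL1

theorem hasDerivAt_log_one_sub_one_div_log :
    HasDerivAt (fun q => log (1 - 1 / log q)) (1 / (p * (log p * (log p - 1)))) p := by
  refine ((hasDerivAt_log_one_sub_one_div hL0 hL1).comp p (hasDerivAt_log hp)).congr_deriv ?_
  field_simp

theorem hasDerivAt_commEnergy : HasDerivAt commEnergy (commEnergyDeriv p) p := by
  refine ((hasDerivAt_pow 2 p).mul (hasDerivAt_log_one_sub_one_div_log hp hL0 hL1)).congr_deriv ?_
  have : log p - 1 ≠ 0 := sub_ne_zero.mpr hL1
  simp only [commEnergyDeriv]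
  field_simp
  ring

theorem hasDerivAt_commEnergyDeriv : HasDerivAt commEnergyDeriv (commEnergyDeriv2 p) p := by
  have hQ : log p * (log p - 1) ≠ 0 := mul_ne_zero hL0 (sub_ne_zero.mpr hL1)
  have hlog := hasDerivAt_log hp
  have hQ' : HasDerivAt (fun q => log q * (log q - 1)) (p⁻¹ * (log p - 1) + log p * p⁻¹) p :=
    hlog.mul (hlog.sub_const 1)
  have := (((hasDerivAt_id p).const_mul 2).mul (hasDerivAt_log_one_sub_one_div_log hp hL0 hL1)).add
    ((hasDerivAt_id p).div hQ' hQ)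
  refine this.congr_deriv ?_
  simp only [commEnergyDeriv2, id]
  field_simp
  ring

end Derivatives

theorem commEnergyDeriv2_nonneg {p : ℝ} (hL : log p < 0) : 0 ≤ commEnergyDeriv2 p := by
  have hlog : 0 ≤ log (1 - 1 / log p) := log_nonneg (one_lt_one_sub_one_div_of_neg hL).le
  have hQ : 0 < log p * (log p - 1) := mul_pos_of_neg_of_neg hL (by linarith)
  have hlast : (2 * log p - 1) / (log p * (log p - 1)) ^ 2 ≤ 0 :=
    div_nonpos_of_nonpos_of_nonneg (by linarith) (sq_nonneg _)
  have : 0 ≤ 3 / (log p * (log p - 1)) := by positivity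
  simp only [commEnergyDeriv2]
  linarith

theorem convexOn_commEnergy : ConvexOn ℝ (Ioo 0 1) commEnergy := by
  have hlog : ∀ p ∈ Ioo (0 : ℝ) 1, log p < 0 := fun p hp => log_neg hp.1 hp.2
  refine convexOn_of_hasDerivAt2_nonneg (convex_Ioo 0 1) isOpen_Ioo
    (f' := commEnergyDeriv) (fun p hp => ?_) (fun p hp => ?_)
    (fun p hp => commEnergyDeriv2_nonneg (hlog p hp))
  · exact hasDerivAt_commEnergy hp.1.ne' (hlog p hp).ne (by linarith [hlog p hp])
  · exact hasDerivAt_commEnergyDeriv hp.1.ne' (hlog p hp).ne (by linarith [hlog p hp])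

theorem theta2_convexOn_general (c E0 : ℝ) (hc : 0 ≤ c) :
    ConvexOn ℝ {x : ℝ × ℝ | 0 < x.1 ∧ x.1 < 1}
      (fun x => c * x.1 ^ 2 * Real.log (1 - 1 / Real.log x.1) + E0 * x.2) := by
  have hcomm := (convexOn_commEnergy.smul hc).comp_linearMap (LinearMap.fst ℝ ℝ ℝ)
  have hlin := (E0 • LinearMap.snd ℝ ℝ ℝ).convexOn hcomm.1
  refine (hcomm.add hlin).congr fun x _ => ?_
  simp [commEnergy, mul_assoc]

/-- **Convexity of the per-round energy `Θ₂`** (Paper: convexity claim for `Θ₂` in the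
JCP control problem, proved in Appendix B via its Hessian). For nonnegative constants
`c` (communication-energy factor) and `E₀` (per-iteration computation energy), the
function `Θ₂(p, H) = c p² ln(1 − 1/ln p) + E₀ H` is convex on
`{(p, H) : 0 < p < 1}`. -/
theorem theta2_convexOn (c E0 : ℝ) (hc : 0 ≤ c) (hE0 : 0 ≤ E0) :
    ConvexOn ℝ {x : ℝ × ℝ | 0 < x.1 ∧ x.1 < 1}
      (fun x => c * x.1 ^ 2 * Real.log (1 - 1 / Real.log x.1) + E0 * x.2) :=
  theta2_convexOn_general c E0 hc
end
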